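/- arXiv:math/0207156 — 2 statements merged into one kernel-verified Lean document; each statement's English description precedes it below -/
import Mathlib

section
/- Let R be an integral domain that is a finitely generated ℂ-algebra, a unique factorization domain, and has Krull dimension 3. Let D : Derivation ℂ R R be a nonzero locally nilpotent derivation (for every r ∈ R there exists n ∈ ℕ with D^[n] r = 0). Then the invariant subalgebra ker D = {r ∈ R | D r = 0}, regarded as a commutative ring in its own right, is a unique factorization domain. -/
private lemma iterZeroOfGe {R : Type*} [CommRing R] [Algebra ℂ R] (D : Derivation ℂ R R)
    {r : R} {n : ℕ} (h : (⇑D)^[n] r = 0) {k : ℕ} (hk : n ≤ k) : (⇑D)^[k] r = 0 := by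
  obtain ⟨j, rfl⟩ := Nat.exists_eq_add_of_le hk
  rw [add_comm, Function.iterate_add_apply, h]
  exact Function.iterate_fixed (map_zero D) j

open Finset in
private lemma iterLeibniz {R : Type*} [CommRing R] [Algebra ℂ R] (D : Derivation ℂ R R)
    (a b : R) (N : ℕ) : (⇑D)^[N] (a * b) =
      ∑ k ∈ Finset.range (N + 1), N.choose k • ((⇑D)^[k] a * (⇑D)^[N - k] b) := by
  induction N with
  | zero => simp
  | succ N ih =>
    rw [Function.iterate_succ_apply', ih, map_sum]
    have step : ∀ k ∈ Finset.range (N + 1),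
        D (N.choose k • ((⇑D)^[k] a * (⇑D)^[N - k] b)) =
          N.choose k • ((⇑D)^[k] a * (⇑D)^[N + 1 - k] b)
          + N.choose k • ((⇑D)^[k+1] a * (⇑D)^[N - k] b) := by
      intro k hk
      rw [Finset.mem_range] at hk
      have h1 : N + 1 - k = (N - k) + 1 := by omega
      rw [map_nsmul, Derivation.leibniz, smul_eq_mul, smul_eq_mul, smul_add, h1,
        Function.iterate_succ_apply', Function.iterate_succ_apply']
      ring_nf
    rw [Finset.sum_congr rfl step, Finset.sum_add_distrib]
    have key : ∑ k ∈ Finset.range (N + 1 + 1), (N+1).choose k • ((⇑D)^[k] a * (⇑D)^[N + 1 - k] b)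
        = (∑ k ∈ Finset.range (N + 1), N.choose k • ((⇑D)^[k+1] a * (⇑D)^[N - k] b))
          + ∑ k ∈ Finset.range (N + 1), N.choose k • ((⇑D)^[k] a * (⇑D)^[N + 1 - k] b) := by
      rw [Finset.sum_range_succ' (fun k => (N+1).choose k • ((⇑D)^[k] a * (⇑D)^[N + 1 - k] b)) (N+1)]
      have e1 : ∀ k ∈ Finset.range (N + 1),
          (N+1).choose (k+1) • ((⇑D)^[k+1] a * (⇑D)^[N + 1 - (k+1)] b)
          = N.choose k • ((⇑D)^[k+1] a * (⇑D)^[N - k] b)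
            + N.choose (k+1) • ((⇑D)^[k+1] a * (⇑D)^[N - k] b) := by
        intro k hk
        have h2 : N + 1 - (k + 1) = N - k := by omega
        rw [h2, Nat.choose_succ_succ, add_smul]
      rw [Finset.sum_congr rfl e1, Finset.sum_add_distrib, add_assoc]
      congr 1
      -- remaining: second sum + first term = shifted full sum
      rw [Finset.sum_range_succ' (fun k => N.choose k • ((⇑D)^[k] a * (⇑D)^[N + 1 - k] b)) N]
      congr 1
      · rw [Finset.sum_range_succ]
        simp only [Nat.choose_succ_self, zero_smul, add_zero]
        apply Finset.sum_congr rfl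
        intro k hk
        rw [Finset.mem_range] at hk
        have : N + 1 - (k + 1) = N - k := by omega
        rw [this]
      · simp
    rw [key, add_comm]

private lemma fcKer {R : Type*} [CommRing R] [IsDomain R] [Algebra ℂ R] (D : Derivation ℂ R R)
    (hln : ∀ r : R, ∃ n : ℕ, (⇑D)^[n] r = 0) {a b : R} (ha : a ≠ 0) (hb : b ≠ 0)
    (hab : D (a * b) = 0) : D a = 0 := by
  classical
  by_contra hda
  have hfa : ∃ n, (⇑D)^[n] a = 0 := hln a
  have hfb : ∃ n, (⇑D)^[n] b = 0 := hln b
  set n := Nat.find hfa with hn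
  set m := Nat.find hfb with hm
  have hna : (⇑D)^[n] a = 0 := Nat.find_spec hfa
  have hmb : (⇑D)^[m] b = 0 := Nat.find_spec hfb
  have hn2 : 2 ≤ n := by
    rcases Nat.lt_or_ge n 2 with h | h
    · interval_cases n
      · exact absurd (by simpa using hna) ha
      · exact absurd (by simpa using hna) hda
    · exact h
  have hm1 : 1 ≤ m := Nat.pos_of_ne_zero (fun h => hb (by simpa [h] using hmb))
  set p := n - 1 with hp
  set q := m - 1 with hq
  have hpa : (⇑D)^[p] a ≠ 0 := Nat.find_min hfa (by omega)
  have hqb : (⇑D)^[q] b ≠ 0 := Nat.find_min hfb (by omega)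
  have hpa1 : (⇑D)^[p + 1] a = 0 := by
    have : p + 1 = n := by omega
    rw [this]; exact Nat.find_spec hfa
  have hqb1 : (⇑D)^[q + 1] b = 0 := by
    have : q + 1 = m := by omega
    rw [this]; exact Nat.find_spec hfb
  -- all iterates of a*b of order ≥ 1 vanish
  have hzero : (⇑D)^[p + q] (a * b) = 0 := by
    have h1 : (⇑D)^[1] (a * b) = 0 := by simpa using hab
    exact iterZeroOfGe D h1 (by omega)
  rw [iterLeibniz D a b (p + q)] at hzero
  have hterm : ∀ k ∈ Finset.range (p + q + 1), k ≠ p →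
      (p+q).choose k • ((⇑D)^[k] a * (⇑D)^[p + q - k] b) = 0 := by
    intro k hk hkp
    rcases Nat.lt_or_ge k p with h | h
    · have : q + 1 ≤ p + q - k := by omega
      rw [iterZeroOfGe D hqb1 this, mul_zero, smul_zero]
    · have h' : p + 1 ≤ k := by omega
      rw [iterZeroOfGe D hpa1 h', zero_mul, smul_zero]
  rw [Finset.sum_eq_single p hterm (by intro h; exact absurd (Finset.mem_range.mpr (by omega)) h)] at hzero
  have hps : p + q - p = q := by omega
  rw [hps] at hzero
  haveI : CharZero R := charZero_of_injective_algebraMap (algebraMap ℂ R).injective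
  have hC : ((p+q).choose p : R) ≠ 0 := by
    have : 0 < (p+q).choose p := Nat.choose_pos (by omega)
    exact_mod_cast Nat.cast_ne_zero.mpr (by omega)
  rw [nsmul_eq_mul] at hzero
  exact (mul_ne_zero hC (mul_ne_zero hpa hqb)) hzero


/-- **Lemma 2.1** (factoriality of the quotient): if `R` is a factorial affine
`ℂ`-algebra of dimension 3 with a nonzero locally nilpotent derivation `D`, then the
invariant subalgebra `ker D` is a unique factorization domain. -/
theorem kernel_of_lnd_on_factorial_threefold_is_UFD
    (R : Type*) [CommRing R] [IsDomain R] [Algebra ℂ R]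
    [Algebra.FiniteType ℂ R] [UniqueFactorizationMonoid R]
    (hdim : ringKrullDim R = 3)
    (D : Derivation ℂ R R) (hD : D ≠ 0)
    (hln : ∀ r : R, ∃ n : ℕ, (⇑D)^[n] r = 0)
    (A : Subalgebra ℂ R) (hA : ∀ r : R, r ∈ A ↔ D r = 0) :
    UniqueFactorizationMonoid A := by
  -- factorial closedness of A
  have fcKer : ∀ {a b : R}, a ≠ 0 → b ≠ 0 → D (a*b) = 0 → D a = 0 :=
    fun ha hb hab => _root_.fcKer D hln ha hb hab
  have hfc : ∀ x y : R, x ≠ 0 → y ≠ 0 → x * y ∈ A → x ∈ A ∧ y ∈ A := by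
    intro x y hx hy hxy
    rw [hA] at hxy
    exact ⟨(hA x).mpr (fcKer hx hy hxy),
      (hA y).mpr (fcKer hy hx (by rwa [mul_comm]))⟩
  -- membership of all factors of a product lying in A
  have hprod : ∀ (f : Multiset R) (c : R), (∀ p ∈ f, p ≠ 0) → c ≠ 0 →
      f.prod * c ∈ A → (∀ p ∈ f, p ∈ A) ∧ c ∈ A := by
    intro f
    induction f using Multiset.induction_on with
    | empty =>
      intro c _ _ h
      exact ⟨fun p hp => absurd hp (by simp), by simpa using h⟩
    | cons p g ih =>
      intro c hne hc hmem
      have hp : p ≠ 0 := hne p (Multiset.mem_cons_self p g)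
      have hg : ∀ x ∈ g, x ≠ 0 := fun x hx => hne x (Multiset.mem_cons_of_mem hx)
      have hgc : g.prod * c ≠ 0 :=
        mul_ne_zero (Multiset.prod_ne_zero (fun h => hg 0 h rfl)) hc
      have hmem' : p * (g.prod * c) ∈ A := by
        rwa [Multiset.prod_cons, mul_assoc] at hmem
      obtain ⟨hpA, hrest⟩ := hfc p (g.prod * c) hp hgc hmem'
      obtain ⟨hgA, hcA⟩ := ih c hg hc hrest
      exact ⟨fun x hx => by
        rcases Multiset.mem_cons.mp hx with h | h
        · exact h ▸ hpA
        · exact hgA x h, hcA⟩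
  -- primes of R lying in A are prime in A
  have hprime : ∀ (p : R) (hp : Prime p) (hpA : p ∈ A), Prime (⟨p, hpA⟩ : A) := by
    intro p hp hpA
    refine ⟨fun h => hp.ne_zero (by simpa using Subtype.ext_iff.mp h), fun h =>
      hp.not_unit (h.map A.val), ?_⟩
    rintro ⟨x, hx⟩ ⟨y, hy⟩ ⟨⟨c, hc⟩, hdvd⟩
    have hdvd' : x * y = p * c := by
      have h := Subtype.ext_iff.mp hdvd
      push_cast at h
      exact h
    rcases hp.2.2 x y ⟨c, hdvd'⟩ with ⟨z, hz⟩ | ⟨z, hz⟩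
    · left
      by_cases hx0 : x = 0
      · exact ⟨0, Subtype.ext (by simp [hx0])⟩
      · have hz0 : z ≠ 0 := fun h => hx0 (by simp [hz, h])
        have hzA : z ∈ A := (hfc p z hp.ne_zero hz0 (hz ▸ hx)).2
        exact ⟨⟨z, hzA⟩, Subtype.ext hz⟩
    · right
      by_cases hy0 : y = 0
      · exact ⟨0, Subtype.ext (by simp [hy0])⟩
      · have hz0 : z ≠ 0 := fun h => hy0 (by simp [hz, h])
        have hzA : z ∈ A := (hfc p z hp.ne_zero hz0 (hz ▸ hy)).2
        exact ⟨⟨z, hzA⟩, Subtype.ext hz⟩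
  -- build prime factorizations in A
  apply UniqueFactorizationMonoid.of_exists_prime_factors
  intro a ha
  have ha' : (a : R) ≠ 0 := fun h => ha (Subtype.ext h)
  obtain ⟨f, hfp, hassoc⟩ := UniqueFactorizationMonoid.exists_prime_factors (a : R) ha'
  obtain ⟨u, hu⟩ := hassoc
  have hne : ∀ p ∈ f, p ≠ 0 := fun p hp => (hfp p hp).ne_zero
  have hmemA : f.prod * (u : R) ∈ A := by rw [hu]; exact a.2
  obtain ⟨hfA, huA⟩ := hprod f (u : R) hne (Units.ne_zero u) hmemA
  have huinvA : (↑u⁻¹ : R) ∈ A := by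
    have h1 : (u : R) * (↑u⁻¹ : R) ∈ A := by
      rw [Units.mul_inv]; exact A.one_mem
    exact (hfc _ _ (Units.ne_zero u) (Units.ne_zero u⁻¹) h1).2
  set g : Multiset A := f.attach.map (fun p => (⟨p.1, hfA p.1 p.2⟩ : A)) with hgdef
  have hgprod : A.val g.prod = f.prod := by
    rw [map_multiset_prod, hgdef, Multiset.map_map]
    simp
  refine ⟨g, ?_, ?_⟩
  · intro b hb
    obtain ⟨p, _, rfl⟩ := Multiset.mem_map.mp hb
    exact hprime p.1 (hfp p.1 p.2) _
  · have h1 : ((⟨(u:R), huA⟩ : A) * ⟨(↑u⁻¹:R), huinvA⟩) = 1 := Subtype.ext (by simp)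
    have h2 : ((⟨(↑u⁻¹:R), huinvA⟩ : A) * ⟨(u:R), huA⟩) = 1 := Subtype.ext (by simp)
    refine ⟨⟨⟨(u:R), huA⟩, ⟨(↑u⁻¹:R), huinvA⟩, h1, h2⟩, Subtype.ext ?_⟩
    show (g.prod : R) * (u : R) = (a : R)
    rw [show ((g.prod : A) : R) = A.val g.prod from rfl, hgprod, hu]
end

section
/- Let R be an integral domain that is a finitely generated ℂ-algebra, a unique factorization domain, and has Krull dimension 3. Let D : Derivation ℂ R R be a nonzero locally nilpotent derivation (for every r ∈ R there exists n ∈ ℕ with D^[n] r = 0), and let A = ker D = {r ∈ R | D r = 0} be the invariant subalgebra. If g ∈ A is a prime element of the ring A, then g, regarded as an element of R, is a prime element of R. -/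
/-!
For a locally nilpotent derivation `D` of a domain of characteristic zero, the top term of
Leibniz's expansion of `D^(m+n) (a * b)` is a nonzero binomial multiple of `D^m a * D^n b`
when `m`, `n` are the `D`-degrees of `a`, `b`; so `D`-degrees add, and `ker D` is factorially
closed. Hence units of `R` and all factors of `g` in `R` lie in `A`, so `g` stays irreducible in
`R`, where irreducibles are prime because `R` is factorial.
-/

open Finset

namespace Derivation

variable {R A : Type*} [CommSemiring R] [CommSemiring A] [Algebra R A]

theorem iterate_apply_mul (D : Derivation R A A) (n : ℕ) (a b : A) :
    D^[n] (a * b) = ∑ ij ∈ antidiagonal n, n.choose ij.1 • (D^[ij.1] a * D^[ij.2] b) := by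
  induction n with
  | zero => simp
  | succ n ih =>
    rw [sum_antidiagonal_choose_succ_nsmul (M := A) (fun i j => D^[i] a * D^[j] b) n]
    simp only [Function.iterate_succ_apply', ih, map_sum, map_nsmul, leibniz, smul_eq_mul,
      smul_add, sum_add_distrib]
    congr 1
    refine sum_congr rfl fun ⟨i, j⟩ hij ↦ ?_
    rw [n.choose_symm_of_eq_add (mem_antidiagonal.1 hij).symm]
    ring

theorem iterate_eq_zero_of_le (D : Derivation R A A) {r : A} {k l : ℕ} (hkl : k ≤ l)
    (hk : D^[k] r = 0) : D^[l] r = 0 := by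
  obtain ⟨j, rfl⟩ := Nat.exists_eq_add_of_le' hkl
  rw [Function.iterate_add_apply, hk, Function.iterate_fixed (map_zero D)]

theorem exists_iterate_ne_zero_and_iterate_succ_eq_zero (D : Derivation R A A) {r : A}
    (hr : r ≠ 0) {n : ℕ} (hn : D^[n] r = 0) : ∃ m, D^[m] r ≠ 0 ∧ D^[m + 1] r = 0 := by
  induction n with
  | zero => exact absurd hn hr
  | succ n ih => exact (em (D^[n] r = 0)).elim ih fun h ↦ ⟨n, h, hn⟩

theorem iterate_add_apply_mul_of_iterate_succ_eq_zero (D : Derivation R A A) {a b : A} {m n : ℕ}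
    (ha : D^[m + 1] a = 0) (hb : D^[n + 1] b = 0) :
    D^[m + n] (a * b) = (m + n).choose m • (D^[m] a * D^[n] b) := by
  rw [iterate_apply_mul, sum_eq_single (m, n)]
  · rintro ⟨i, j⟩ hij hne
    rw [HasAntidiagonal.mem_antidiagonal] at hij
    obtain hi | hj : m < i ∨ n < j := by
      by_contra! h
      exact hne (Prod.ext (by omega) (by omega))
    · rw [D.iterate_eq_zero_of_le hi ha, zero_mul, smul_zero]
    · rw [D.iterate_eq_zero_of_le hj hb, mul_zero, smul_zero]
  · simp

theorem apply_eq_zero_and_apply_eq_zero_of_apply_mul_eq_zero [IsDomain A] [CharZero A]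
    (D : Derivation R A A) (hD : ∀ r, ∃ n, D^[n] r = 0) {a b : A} (ha : a ≠ 0) (hb : b ≠ 0)
    (hab : D (a * b) = 0) : D a = 0 ∧ D b = 0 := by
  obtain ⟨m, hma, hma'⟩ :=
    D.exists_iterate_ne_zero_and_iterate_succ_eq_zero ha (hD a).choose_spec
  obtain ⟨n, hnb, hnb'⟩ :=
    D.exists_iterate_ne_zero_and_iterate_succ_eq_zero hb (hD b).choose_spec
  obtain ⟨rfl, rfl⟩ : m = 0 ∧ n = 0 := by
    by_contra! hmn
    have htop := D.iterate_add_apply_mul_of_iterate_succ_eq_zero hma' hnb'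
    rw [D.iterate_eq_zero_of_le (k := 1) (by omega) hab] at htop
    exact smul_ne_zero (Nat.choose_pos (by omega)).ne' (mul_ne_zero hma hnb) htop.symm
  exact ⟨hma', hnb'⟩

end Derivation

def IsFactoriallyClosed {M : Type*} [MonoidWithZero M] (s : Set M) : Prop :=
  ∀ a b : M, a * b ≠ 0 → a * b ∈ s → a ∈ s ∧ b ∈ s

namespace Subalgebra

variable {R S : Type*} [CommSemiring R] [CommSemiring S] [Nontrivial S] [Algebra R S]
  {A : Subalgebra R S}

theorem isUnit_of_isUnit_coe (hA : IsFactoriallyClosed (A : Set S)) {x : A}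
    (hx : IsUnit (x : S)) : IsUnit x := by
  obtain ⟨u, hu⟩ := hx
  have hxu : (x : S) * ↑u⁻¹ = 1 := by rw [← hu, Units.mul_inv]
  have hinv : (↑u⁻¹ : S) ∈ A := (hA _ _ (hxu ▸ one_ne_zero) (hxu ▸ A.one_mem)).2
  exact IsUnit.of_mul_eq_one (a := x) ⟨_, hinv⟩ (Subtype.ext hxu)

theorem irreducible_coe (hA : IsFactoriallyClosed (A : Set S)) {g : A} (hg : Irreducible g) :
    Irreducible (g : S) := by
  refine ⟨fun hu ↦ hg.not_isUnit (isUnit_of_isUnit_coe hA hu), fun p q hpq ↦ ?_⟩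
  have hpq0 : p * q ≠ 0 := hpq ▸ by simpa using hg.ne_zero
  obtain ⟨hp, hq⟩ := hA p q hpq0 (hpq ▸ g.2)
  exact (hg.isUnit_or_isUnit (Subtype.ext hpq : g = ⟨p, hp⟩ * ⟨q, hq⟩)).imp
    (·.map A.val) (·.map A.val)

end Subalgebra

theorem prime_in_kernel_remains_prime_general
    (R : Type*) [CommRing R] [IsDomain R] [Algebra ℂ R]
    [UniqueFactorizationMonoid R]
    (D : Derivation ℂ R R)
    (hln : ∀ r : R, ∃ n : ℕ, (⇑D)^[n] r = 0)
    (A : Subalgebra ℂ R) (hA : ∀ r : R, r ∈ A ↔ D r = 0)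
    (g : A) (hg : Prime g) :
    Prime (g : R) := by
  have : CharZero R := charZero_of_injective_algebraMap (algebraMap ℂ R).injective
  have hclosed : IsFactoriallyClosed (A : Set R) := fun a b hab hmem ↦ by
    simpa only [SetLike.mem_coe, hA] using
      D.apply_eq_zero_and_apply_eq_zero_of_apply_mul_eq_zero hln (left_ne_zero_of_mul hab)
        (right_ne_zero_of_mul hab) ((hA _).1 hmem)
  exact UniqueFactorizationMonoid.irreducible_iff_prime.1
    (A.irreducible_coe hclosed hg.irreducible)

/-- **Lemma 2.1** (irreducibility of `E = π⁻¹(Γ)`): if `R` is a factorial affine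
`ℂ`-algebra of dimension 3 with a nonzero locally nilpotent derivation `D` and invariant
subalgebra `A = ker D`, then a prime element `g` of `A` remains prime in `R`. -/
theorem prime_in_kernel_remains_prime
    (R : Type*) [CommRing R] [IsDomain R] [Algebra ℂ R]
    [Algebra.FiniteType ℂ R] [UniqueFactorizationMonoid R]
    (hdim : ringKrullDim R = 3)
    (D : Derivation ℂ R R) (hD : D ≠ 0)
    (hln : ∀ r : R, ∃ n : ℕ, (⇑D)^[n] r = 0)
    (A : Subalgebra ℂ R) (hA : ∀ r : R, r ∈ A ↔ D r = 0)
    (g : A) (hg : Prime g) :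
    Prime (g : R) :=
  prime_in_kernel_remains_prime_general R D hln A hA g hg
end
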